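/- arXiv:2307.02221 — 4 statements merged into one kernel-verified Lean document; each statement's English description precedes it below -/
import Mathlib

section
/- Let θ=(k_r) be a lacunary sequence and f an unbounded modulus function that is not θ-compatible. Then there exists a sequence (B_k) of nonempty closed subsets of ℝ (with the usual metric) and B = {0} such that (B_k) is Wijsman θ-lacunary statistically convergent to B but not Wijsman θ-lacunary f-statistically convergent to B. Consequently, if every Wijsman θ-lacunary statistically convergent sequence of closed subsets of ℝ is Wijsman θ-lacunary f-statistically convergent to the same limit, then f is θ-compatible. -/
open Filter Metric Set

/-- `f : ℝ → ℝ` is an (unbounded) modulus function (considered on `[0,∞)`):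
`f x = 0 ↔ x = 0`, subadditive, increasing, continuous from the right at `0`,
and unbounded. -/
def IsModulus (f : ℝ → ℝ) : Prop :=
  (∀ x ∈ Set.Ici (0:ℝ), 0 ≤ f x) ∧
  (∀ x ∈ Set.Ici (0:ℝ), (f x = 0 ↔ x = 0)) ∧
  (∀ x ∈ Set.Ici (0:ℝ), ∀ y ∈ Set.Ici (0:ℝ), f (x + y) ≤ f x + f y) ∧
  MonotoneOn f (Set.Ici (0:ℝ)) ∧
  ContinuousWithinAt f (Set.Ici (0:ℝ)) 0 ∧
  (∀ M : ℝ, ∃ x ∈ Set.Ici (0:ℝ), M < f x)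

/-- `φ(ε) = limsup_n f(nε)/f(n)`. -/
noncomputable def modPhi (f : ℝ → ℝ) (ε : ℝ) : ℝ :=
  Filter.limsup (fun n : ℕ => f ((n : ℝ) * ε) / f (n : ℝ)) Filter.atTop

/-- A modulus function is compatible if `φ(ε) → 0` as `ε → 0⁺`. -/
def Compatible (f : ℝ → ℝ) : Prop :=
  Filter.Tendsto (modPhi f) (nhdsWithin 0 (Set.Ioi 0)) (nhds 0)

/-- Wijsman statistical convergence of a sequence of subsets of a metric space. -/
def WijsmanStatConv {X : Type*} [MetricSpace X] (A : ℕ → Set X) (B : Set X) : Prop :=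
  ∀ x : X, ∀ ε > (0:ℝ),
    Filter.Tendsto (fun n : ℕ =>
      (((Finset.range n).filter
        (fun j => ε < |infDist x (A j) - infDist x B|)).card : ℝ) / (n : ℝ))
      Filter.atTop (nhds 0)

/-- Wijsman `f`-statistical convergence of a sequence of subsets of a metric space. -/
def WijsmanFStatConv {X : Type*} [MetricSpace X] (f : ℝ → ℝ) (A : ℕ → Set X)
    (B : Set X) : Prop :=
  ∀ x : X, ∀ ε > (0:ℝ),
    Filter.Tendsto (fun n : ℕ =>
      f ((((Finset.range n).filter
        (fun j => ε < |infDist x (A j) - infDist x B|)).card : ℝ)) / f (n : ℝ))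
      Filter.atTop (nhds 0)

/-- A real sequence is `f`-strong Cesàro convergent to `L`. -/
def FStrongCesaro (f : ℝ → ℝ) (x : ℕ → ℝ) (L : ℝ) : Prop :=
  Filter.Tendsto (fun n : ℕ =>
    f (∑ j ∈ Finset.range n, |x j - L|) / f (n : ℝ)) Filter.atTop (nhds 0)

/-- Wijsman `f`-strong Cesàro convergence. -/
def WijsmanFStrongCesaro {X : Type*} [MetricSpace X] (f : ℝ → ℝ) (A : ℕ → Set X)
    (B : Set X) : Prop :=
  ∀ x : X, FStrongCesaro f (fun j => infDist x (A j)) (infDist x B)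

/-- Wijsman strong Cesàro convergence (the case `f = id`). -/
def WijsmanStrongCesaro {X : Type*} [MetricSpace X] (A : ℕ → Set X) (B : Set X) : Prop :=
  ∀ x : X,
    Filter.Tendsto (fun n : ℕ =>
      (∑ j ∈ Finset.range n, |infDist x (A j) - infDist x B|) / (n : ℝ))
      Filter.atTop (nhds 0)

/-- A real sequence is uniformly integrable. -/
def UnifIntegrable (x : ℕ → ℝ) : Prop :=
  Filter.Tendsto (fun c : ℝ =>
    ⨆ n : ℕ, (∑ j ∈ Finset.range n, if c ≤ |x j| then |x j| else 0) / (n : ℝ))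
    Filter.atTop (nhds 0)

/-- Wijsman uniform integrability. -/
def WijsmanUnifIntegrable {X : Type*} [MetricSpace X] (A : ℕ → Set X) : Prop :=
  ∀ x : X, UnifIntegrable (fun j => infDist x (A j))

/-- A lacunary sequence: strictly increasing, starting at `0`,
with gaps `h_r = k_{r+1} - k_r → ∞`. -/
def IsLacunary (k : ℕ → ℕ) : Prop :=
  k 0 = 0 ∧ StrictMono k ∧
    Filter.Tendsto (fun r : ℕ => k (r + 1) - k r) Filter.atTop Filter.atTop

/-- The gaps `h_r` of a lacunary sequence. -/
def lacH (k : ℕ → ℕ) (r : ℕ) : ℕ := k (r + 1) - k r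

/-- The blocks `I_r = (k_r, k_{r+1}]` of a lacunary sequence. -/
def lacI (k : ℕ → ℕ) (r : ℕ) : Finset ℕ := Finset.Ioc (k r) (k (r + 1))

/-- `φ_θ(ε) = limsup_t f(h_t ε)/f(h_t)`. -/
noncomputable def modPhiTheta (f : ℝ → ℝ) (k : ℕ → ℕ) (ε : ℝ) : ℝ :=
  Filter.limsup (fun t : ℕ => f ((lacH k t : ℝ) * ε) / f ((lacH k t : ℝ))) Filter.atTop

/-- `f` is `θ`-compatible if `φ_θ(ε) → 0` as `ε → 0⁺`. -/
def ThetaCompatible (f : ℝ → ℝ) (k : ℕ → ℕ) : Prop :=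
  Filter.Tendsto (modPhiTheta f k) (nhdsWithin 0 (Set.Ioi 0)) (nhds 0)

/-- Wijsman `θ`-lacunary statistical convergence. -/
def WijsmanLacStatConv {X : Type*} [MetricSpace X] (k : ℕ → ℕ) (A : ℕ → Set X)
    (B : Set X) : Prop :=
  ∀ x : X, ∀ ε > (0:ℝ),
    Filter.Tendsto (fun r : ℕ =>
      (((lacI k r).filter
        (fun j => ε < |infDist x (A j) - infDist x B|)).card : ℝ) / (lacH k r : ℝ))
      Filter.atTop (nhds 0)

/-- Wijsman `θ`-lacunary `f`-statistical convergence. -/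
def WijsmanLacFStatConv {X : Type*} [MetricSpace X] (f : ℝ → ℝ) (k : ℕ → ℕ)
    (A : ℕ → Set X) (B : Set X) : Prop :=
  ∀ x : X, ∀ ε > (0:ℝ),
    Filter.Tendsto (fun r : ℕ =>
      f ((((lacI k r).filter
        (fun j => ε < |infDist x (A j) - infDist x B|)).card : ℝ)) / f ((lacH k r : ℝ)))
      Filter.atTop (nhds 0)

/-- Wijsman `θ`-lacunary `f`-strong Cesàro convergence. -/
def WijsmanLacFStrongCesaro {X : Type*} [MetricSpace X] (f : ℝ → ℝ) (k : ℕ → ℕ)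
    (A : ℕ → Set X) (B : Set X) : Prop :=
  ∀ x : X,
    Filter.Tendsto (fun r : ℕ =>
      f (∑ j ∈ lacI k r, |infDist x (A j) - infDist x B|) / f ((lacH k r : ℝ)))
      Filter.atTop (nhds 0)

/-- Wijsman `θ`-lacunary strong Cesàro convergence (the case `f = id`). -/
def WijsmanLacStrongCesaro {X : Type*} [MetricSpace X] (k : ℕ → ℕ)
    (A : ℕ → Set X) (B : Set X) : Prop :=
  ∀ x : X,
    Filter.Tendsto (fun r : ℕ =>
      (∑ j ∈ lacI k r, |infDist x (A j) - infDist x B|) / (lacH k r : ℝ))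
      Filter.atTop (nhds 0)

/-- A real sequence is `θ`-lacunary uniformly integrable. -/
def LacUnifIntegrable (k : ℕ → ℕ) (x : ℕ → ℝ) : Prop :=
  Filter.Tendsto (fun M : ℝ =>
    ⨆ t : ℕ, (∑ j ∈ lacI k t, if M ≤ |x j| then |x j| else 0) / (lacH k t : ℝ))
    Filter.atTop (nhds 0)

/-- Wijsman `θ`-lacunary uniform integrability. -/
def WijsmanLacUnifIntegrable {X : Type*} [MetricSpace X] (k : ℕ → ℕ)
    (A : ℕ → Set X) : Prop :=
  ∀ x : X, LacUnifIntegrable k (fun j => infDist x (A j))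


/-!
Since `φ_θ` is monotone and nonnegative on `(0, 1)` and does not tend to `0` at `0⁺`, it is bounded
below there by some `δ > 0`. So for each `ε = 1 / (i + 2)` infinitely many blocks satisfy
`f (h_t ε) > δ / 2 · f (h_t)`, and a diagonal choice yields parameters `ε_r → 0` with
`f (h_r ε_r) > δ / 2 · f (h_r)` for infinitely many `r`. Put `B_j = {1}` on the first
`c_r = ⌈h_r ε_r⌉` indices of each block `I_r` and `B_j = {0}` elsewhere: the proportion
`c_r / h_r ≤ ε_r + 1 / h_r` of exceptional indices tends to `0`, whereas `f (c_r) / f (h_r) > δ / 2`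
infinitely often.
-/

open Topology

section Lacunary

variable {k : ℕ → ℕ}

lemma eq_of_mem_lacI_of_mem_lacI (hk : StrictMono k) {j r s : ℕ} (hr : j ∈ lacI k r)
    (hs : j ∈ lacI k s) : r = s := by
  simp only [lacI, Finset.mem_Ioc] at hr hs
  by_contra hne
  rcases Nat.lt_or_gt_of_ne hne with h | h
  · have := hk.monotone (show r + 1 ≤ s by omega)
    omega
  · have := hk.monotone (show s + 1 ≤ r by omega)
    omega

lemma Ioc_subset_lacI (hk : StrictMono k) {r c : ℕ} (hc : c ≤ lacH k r) :
    Finset.Ioc (k r) (k r + c) ⊆ lacI k r := by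
  have := hk (Nat.lt_add_one r)
  unfold lacH at hc
  exact Finset.Ioc_subset_Ioc_right (by omega)

def lacPrefixes (k c : ℕ → ℕ) : Set ℕ := {j | ∃ r, j ∈ Finset.Ioc (k r) (k r + c r)}

lemma filter_lacI_mem_lacPrefixes (hk : StrictMono k) {c : ℕ → ℕ} (hc : ∀ r, c r ≤ lacH k r)
    [DecidablePred (· ∈ lacPrefixes k c)] (r : ℕ) :
    (lacI k r).filter (· ∈ lacPrefixes k c) = Finset.Ioc (k r) (k r + c r) := by
  refine Finset.ext fun j => ?_
  rw [Finset.mem_filter]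
  constructor
  · rintro ⟨hjr, s, hjs⟩
    rwa [eq_of_mem_lacI_of_mem_lacI hk hjr (Ioc_subset_lacI hk (hc s) hjs)]
  · exact fun hj => ⟨Ioc_subset_lacI hk (hc r) hj, r, hj⟩

lemma card_filter_lacI_mem_lacPrefixes (hk : StrictMono k) {c : ℕ → ℕ}
    (hc : ∀ r, c r ≤ lacH k r) [DecidablePred (· ∈ lacPrefixes k c)] (r : ℕ) :
    ((lacI k r).filter (· ∈ lacPrefixes k c)).card = c r := by
  rw [filter_lacI_mem_lacPrefixes hk hc, Nat.card_Ioc, Nat.add_sub_cancel_left]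

end Lacunary

section TwoPointSets

variable {X : Type*} [MetricSpace X] {p : ℕ → Prop} [DecidablePred p] {a b : X}

lemma wijsmanLacStatConv_ite {k : ℕ → ℕ}
    (h : Tendsto (fun r => (((lacI k r).filter p).card : ℝ) / lacH k r) atTop (𝓝 0)) :
    WijsmanLacStatConv k (fun j => if p j then {a} else {b}) {b} := by
  intro x ε hε
  refine squeeze_zero (fun r => by positivity) (fun r => ?_) h
  refine div_le_div_of_nonneg_right ?_ (Nat.cast_nonneg _)
  refine Nat.cast_le.2 (Finset.card_le_card (Finset.monotone_filter_right _ fun j _ hj => ?_))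
  by_contra hp
  simp only [hp, if_false, sub_self, abs_zero] at hj
  linarith

lemma tendsto_of_wijsmanLacFStatConv_ite {f : ℝ → ℝ} {k : ℕ → ℕ} (hab : a ≠ b)
    (h : WijsmanLacFStatConv f k (fun j => if p j then {a} else {b}) {b}) :
    Tendsto (fun r => f ((lacI k r).filter p).card / f (lacH k r)) atTop (𝓝 0) := by
  have hab' : 0 < dist a b := dist_pos.2 hab
  have hfilter : ∀ r, (lacI k r).filter (fun j => dist a b / 2 <
      |infDist b (if p j then {a} else {b}) - infDist b {b}|) = (lacI k r).filter p := by
    refine fun r => Finset.filter_congr fun j _ => ?_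
    by_cases hp : p j <;> simp [hp, dist_comm, abs_of_pos hab', hab', (half_pos hab').le]
  simpa only [hfilter] using h b (dist a b / 2) (by positivity)

end TwoPointSets

section ModPhiTheta

variable {f : ℝ → ℝ} (hf0 : ∀ x ∈ Ici (0:ℝ), 0 ≤ f x) (hfm : MonotoneOn f (Ici 0))
include hf0 hfm

lemma div_apply_mul_mem_Icc {x ε : ℝ} (hx : 0 ≤ x) (hε : ε ∈ Icc (0:ℝ) 1) :
    f (x * ε) / f x ∈ Icc (0:ℝ) 1 :=
  ⟨div_nonneg (hf0 _ (mul_nonneg hx hε.1)) (hf0 x hx),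
    div_le_one_of_le₀ (hfm (mul_nonneg hx hε.1) hx (mul_le_of_le_one_right hx hε.2)) (hf0 x hx)⟩

lemma div_apply_mul_le_div_apply_mul {x ε ε' : ℝ} (hx : 0 ≤ x) (hε : 0 ≤ ε) (hεε' : ε ≤ ε') :
    f (x * ε) / f x ≤ f (x * ε') / f x :=
  div_le_div_of_nonneg_right
    (hfm (mul_nonneg hx hε) (mul_nonneg hx (hε.trans hεε')) (mul_le_mul_of_nonneg_left hεε' hx))
    (hf0 x hx)

variable (k : ℕ → ℕ)

lemma isBoundedUnder_le_modPhiTheta_seq {ε : ℝ} (hε : ε ∈ Icc (0:ℝ) 1) :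
    IsBoundedUnder (· ≤ ·) atTop (fun t => f ((lacH k t : ℝ) * ε) / f (lacH k t)) :=
  isBoundedUnder_of_eventually_le (Eventually.of_forall fun _ =>
    (div_apply_mul_mem_Icc hf0 hfm (Nat.cast_nonneg _) hε).2)

lemma isCoboundedUnder_le_modPhiTheta_seq {ε : ℝ} (hε : ε ∈ Icc (0:ℝ) 1) :
    IsCoboundedUnder (· ≤ ·) atTop (fun t => f ((lacH k t : ℝ) * ε) / f (lacH k t)) :=
  isCoboundedUnder_le_of_le atTop fun _ =>
    (div_apply_mul_mem_Icc hf0 hfm (Nat.cast_nonneg _) hε).1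

lemma modPhiTheta_nonneg {ε : ℝ} (hε : ε ∈ Icc (0:ℝ) 1) : 0 ≤ modPhiTheta f k ε :=
  le_limsup_of_frequently_le (Frequently.of_forall fun _ =>
    (div_apply_mul_mem_Icc hf0 hfm (Nat.cast_nonneg _) hε).1)
    (isBoundedUnder_le_modPhiTheta_seq hf0 hfm k hε)

lemma monotoneOn_modPhiTheta : MonotoneOn (modPhiTheta f k) (Icc 0 1) :=
  fun _ hε _ hε' hεε' => limsup_le_limsup
    (Eventually.of_forall fun _ =>
      div_apply_mul_le_div_apply_mul hf0 hfm (Nat.cast_nonneg _) hε.1 hεε')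
    (isCoboundedUnder_le_modPhiTheta_seq hf0 hfm k hε)
    (isBoundedUnder_le_modPhiTheta_seq hf0 hfm k hε')

lemma frequently_lt_of_lt_modPhiTheta {ε a : ℝ} (hε : ε ∈ Icc (0:ℝ) 1)
    (ha : a < modPhiTheta f k ε) :
    ∃ᶠ t in atTop, a < f ((lacH k t : ℝ) * ε) / f (lacH k t) :=
  frequently_lt_of_lt_limsup (isCoboundedUnder_le_modPhiTheta_seq hf0 hfm k hε) ha

end ModPhiTheta

lemma exists_pos_le_of_not_tendsto_nhdsGT_zero {g : ℝ → ℝ}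
    (hg0 : ∀ ε ∈ Ioo (0:ℝ) 1, 0 ≤ g ε) (hg : MonotoneOn g (Ioo 0 1))
    (hlim : ¬ Tendsto g (𝓝[>] 0) (𝓝 0)) : ∃ δ > 0, ∀ ε ∈ Ioo (0:ℝ) 1, δ ≤ g ε := by
  have hne : (Ioo (0:ℝ) 1).Nonempty := nonempty_Ioo.2 one_pos
  have hbdd : BddBelow (g '' Ioo 0 1) := ⟨0, forall_mem_image.2 hg0⟩
  refine ⟨sInf (g '' Ioo 0 1), ?_, fun ε hε => csInf_le hbdd (mem_image_of_mem g hε)⟩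
  refine (le_csInf (hne.image g) (forall_mem_image.2 hg0)).lt_of_ne fun h => hlim ?_
  simpa [← h] using hg.tendsto_nhdsWithin_Ioo_right hne hbdd

lemma exists_tendsto_zero_frequently {P : ℝ → ℕ → Prop}
    (h : ∀ ε ∈ Ioo (0:ℝ) 1, ∃ᶠ t in atTop, P ε t) :
    ∃ ε : ℕ → ℝ, (∀ r, ε r ∈ Icc (0:ℝ) 1) ∧ Tendsto ε atTop (𝓝 0) ∧
      ∃ᶠ r in atTop, P (ε r) r := by
  have hmem : ∀ i : ℕ, 1 / ((i:ℝ) + 2) ∈ Ioo (0:ℝ) 1 := fun i =>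
    ⟨by positivity, (div_lt_one (by positivity)).2 (by linarith [(Nat.cast_nonneg i : (0:ℝ) ≤ i)])⟩
  obtain ⟨T, hT, hPT⟩ := extraction_forall_of_frequently fun i => h _ (hmem i)
  -- `ε (T i) = 1 / (i + 2)`, and `ε` vanishes off the range of `T`
  set ε := Function.extend T (fun i : ℕ => 1 / ((i:ℝ) + 2)) 0
  have hεT : ∀ i, ε (T i) = 1 / ((i:ℝ) + 2) := hT.injective.extend_apply _ _
  have hε : ∀ r, ε r = 0 ∨ ∃ i, T i = r ∧ ε r = 1 / ((i:ℝ) + 2) := by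
    intro r
    by_cases hr : ∃ i, T i = r
    · obtain ⟨i, rfl⟩ := hr
      exact Or.inr ⟨i, rfl, hεT i⟩
    · exact Or.inl (Function.extend_apply' _ _ _ hr)
  have hε01 : ∀ r, ε r ∈ Icc (0:ℝ) 1 := fun r => by
    rcases hε r with h0 | ⟨i, -, hi⟩
    · simp [h0]
    · exact hi ▸ Ioo_subset_Icc_self (hmem i)
  refine ⟨ε, hε01, ?_, hT.tendsto_atTop.frequently (Frequently.of_forall fun i => ?_)⟩
  · refine tendsto_order.2 ⟨fun a ha => Eventually.of_forall fun r => ha.trans_le (hε01 r).1,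
      fun a ha => ?_⟩
    obtain ⟨i₀, hi₀⟩ := exists_nat_one_div_lt ha
    filter_upwards [eventually_ge_atTop (T i₀)] with r hr
    rcases hε r with h0 | ⟨i, rfl, hi⟩
    · rwa [h0]
    · have : (i₀:ℝ) ≤ i := Nat.cast_le.2 (hT.le_iff_le.1 hr)
      rw [hi]
      refine lt_of_le_of_lt ?_ hi₀
      gcongr
      linarith
  · simpa only [hεT] using hPT i

lemma tendsto_natCeil_mul_div_zero {h : ℕ → ℕ} {ε : ℕ → ℝ} (hh : Tendsto h atTop atTop)
    (hε0 : ∀ r, 0 ≤ ε r) (hε : Tendsto ε atTop (𝓝 0)) :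
    Tendsto (fun r => (⌈(h r : ℝ) * ε r⌉₊ : ℝ) / h r) atTop (𝓝 0) := by
  have hinv : Tendsto (fun r => (h r : ℝ)⁻¹) atTop (𝓝 0) :=
    tendsto_inv_atTop_zero.comp (tendsto_natCast_atTop_atTop.comp hh)
  refine squeeze_zero' (Eventually.of_forall fun r => by positivity) ?_
    (by simpa using hε.add hinv)
  filter_upwards [hh.eventually_gt_atTop 0] with r hr
  have hr' : (0:ℝ) < h r := Nat.cast_pos.2 hr
  calc (⌈(h r : ℝ) * ε r⌉₊ : ℝ) / h r ≤ ((h r : ℝ) * ε r + 1) / h r := by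
        gcongr
        exact (Nat.ceil_lt_add_one (by have := hε0 r; positivity)).le
    _ = ε r + (h r : ℝ)⁻¹ := by field_simp

lemma exists_lacCount_tendsto_zero_not_tendsto {k : ℕ → ℕ} {f : ℝ → ℝ}
    (hk : Tendsto (lacH k) atTop atTop) (hf0 : ∀ x ∈ Ici (0:ℝ), 0 ≤ f x)
    (hfm : MonotoneOn f (Ici 0)) (hnc : ¬ ThetaCompatible f k) :
    ∃ c : ℕ → ℕ, (∀ r, c r ≤ lacH k r) ∧
      Tendsto (fun r => (c r : ℝ) / lacH k r) atTop (𝓝 0) ∧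
      ¬ Tendsto (fun r => f (c r) / f (lacH k r)) atTop (𝓝 0) := by
  obtain ⟨δ, hδ, hδφ⟩ := exists_pos_le_of_not_tendsto_nhdsGT_zero
    (fun ε hε => modPhiTheta_nonneg hf0 hfm k (Ioo_subset_Icc_self hε))
    ((monotoneOn_modPhiTheta hf0 hfm k).mono Ioo_subset_Icc_self) hnc
  obtain ⟨ε, hε01, hε, hfreq⟩ := exists_tendsto_zero_frequently fun ε hε =>
    frequently_lt_of_lt_modPhiTheta hf0 hfm k (Ioo_subset_Icc_self hε)
      ((half_lt_self hδ).trans_le (hδφ ε hε))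
  refine ⟨fun r => ⌈(lacH k r : ℝ) * ε r⌉₊,
    fun r => Nat.ceil_le.2 (mul_le_of_le_one_right (Nat.cast_nonneg _) (hε01 r).2),
    tendsto_natCeil_mul_div_zero hk (fun r => (hε01 r).1) hε, fun hlim => ?_⟩
  obtain ⟨r, hr_big, hr_small⟩ :=
    (hfreq.and_eventually (hlim.eventually (gt_mem_nhds (half_pos hδ)))).exists
  have hx : (0:ℝ) ≤ lacH k r := Nat.cast_nonneg _
  have hceil : f ((lacH k r : ℝ) * ε r) / f (lacH k r) ≤ f ⌈(lacH k r : ℝ) * ε r⌉₊ / f (lacH k r) :=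
    div_le_div_of_nonneg_right (hfm (mul_nonneg hx (hε01 r).1) (mem_Ici.2 (Nat.cast_nonneg _))
      (Nat.le_ceil _)) (hf0 _ hx)
  linarith

theorem exists_lac_stat_not_lac_fstat_of_not_thetaCompatible
    (k : ℕ → ℕ) (hk : IsLacunary k)
    (f : ℝ → ℝ) (hf : IsModulus f) (hnc : ¬ ThetaCompatible f k) :
    (∃ B : ℕ → Set ℝ, (∀ n, (B n).Nonempty ∧ IsClosed (B n)) ∧
      WijsmanLacStatConv k B ({0} : Set ℝ) ∧
      ¬ WijsmanLacFStatConv f k B ({0} : Set ℝ)) ∧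
    ((∀ (C : ℕ → Set ℝ) (D : Set ℝ), (∀ n, (C n).Nonempty ∧ IsClosed (C n)) →
        D.Nonempty → IsClosed D → WijsmanLacStatConv k C D →
        WijsmanLacFStatConv f k C D) →
      ThetaCompatible f k) := by
  classical
  obtain ⟨c, hc, hc_stat, hc_fstat⟩ :=
    exists_lacCount_tendsto_zero_not_tendsto hk.2.2 hf.1 hf.2.2.2.1 hnc
  set B : ℕ → Set ℝ := fun j => if j ∈ lacPrefixes k c then {1} else {0}
  have hB : ∀ n, (B n).Nonempty ∧ IsClosed (B n) := fun n => by
    by_cases hn : n ∈ lacPrefixes k c <;> simp [B, hn]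
  have hcard := card_filter_lacI_mem_lacPrefixes hk.2.1 hc
  have hstat : WijsmanLacStatConv k B {0} :=
    wijsmanLacStatConv_ite (by simpa only [hcard] using hc_stat)
  have hfstat : ¬ WijsmanLacFStatConv f k B {0} := fun h =>
    hc_fstat (by simpa only [hcard] using tendsto_of_wijsmanLacFStatConv_ite one_ne_zero h)
  exact ⟨⟨B, hB, hstat, hfstat⟩,
    fun H => (hfstat (H B {0} hB (singleton_nonempty 0) isClosed_singleton hstat)).elim⟩
end

section
/- Let (X,d) be a metric space, θ=(k_r) a lacunary sequence, f any unbounded modulus function, (A_k) a sequence in CL(X) and A ∈ CL(X). If (A_k) is Wijsman θ-lacunary f-strong Cesàro convergent to A, then (A_k) is Wijsman θ-lacunary f-statistically convergent to A. -/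
open Filter Metric Set

/-! A Markov-type count: each index counted in `#{j ∈ I_r : ε < |u_j|}` contributes
more than `ε` to `s = ∑_{j ∈ I_r} |u_j|`, so that count is at most `m s` with `m = ⌈ε⁻¹⌉`, and
monotonicity and subadditivity of `f` give `f(count) ≤ f(m s) ≤ m f(s)`. Dividing by `f(h_r)`
shows the statistical quotient is at most `m` times the strong Cesàro one. -/

open Finset

namespace IsModulus

variable {f : ℝ → ℝ}

lemma nonneg (hf : IsModulus f) {x : ℝ} (hx : 0 ≤ x) : 0 ≤ f x :=
  hf.1 x hx

lemma map_zero (hf : IsModulus f) : f 0 = 0 :=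
  (hf.2.1 0 self_mem_Ici).2 rfl

lemma map_add_le (hf : IsModulus f) {x y : ℝ} (hx : 0 ≤ x) (hy : 0 ≤ y) :
    f (x + y) ≤ f x + f y :=
  hf.2.2.1 x hx y hy

lemma mono (hf : IsModulus f) {x y : ℝ} (hx : 0 ≤ x) (hxy : x ≤ y) : f x ≤ f y :=
  hf.2.2.2.1 hx (hx.trans hxy) hxy

lemma map_nat_mul_le (hf : IsModulus f) (n : ℕ) {x : ℝ} (hx : 0 ≤ x) :
    f (n * x) ≤ n * f x := by
  induction n with
  | zero => simp [hf.map_zero]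
  | succ n ih =>
    calc f ((n + 1 : ℕ) * x) = f (n * x + x) := by push_cast; ring_nf
      _ ≤ f (n * x) + f x := hf.map_add_le (by positivity) hx
      _ ≤ n * f x + f x := by gcongr
      _ = (n + 1 : ℕ) * f x := by push_cast; ring

lemma le_nat_mul_of_le_nat_mul (hf : IsModulus f) {x y : ℝ} {n : ℕ} (hx : 0 ≤ x)
    (hy : 0 ≤ y) (hxy : x ≤ n * y) : f x ≤ n * f y :=
  (hf.mono hx hxy).trans (hf.map_nat_mul_le n hy)

end IsModulus

lemma Finset.card_filter_lt_abs_le_ceil_inv_mul_sum {ι : Type*} (s : Finset ι) (u : ι → ℝ)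
    {ε : ℝ} (hε : 0 < ε) :
    (#{j ∈ s | ε < |u j|} : ℝ) ≤ ⌈ε⁻¹⌉₊ * ∑ j ∈ s, |u j| := by
  have markov : #{j ∈ s | ε < |u j|} * ε ≤ ∑ j ∈ s, |u j| :=
    calc #{j ∈ s | ε < |u j|} * ε ≤ ∑ j ∈ s with ε < |u j|, |u j| := by
          rw [← nsmul_eq_mul]
          exact card_nsmul_le_sum _ _ _ fun j hj => (mem_filter.1 hj).2.le
      _ ≤ ∑ j ∈ s, |u j| :=
          sum_le_sum_of_subset_of_nonneg (filter_subset _ _) fun j _ _ => abs_nonneg _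
  calc (#{j ∈ s | ε < |u j|} : ℝ) ≤ ε⁻¹ * ∑ j ∈ s, |u j| := by
        rw [inv_mul_eq_div, le_div_iff₀ hε]; exact markov
    _ ≤ ⌈ε⁻¹⌉₊ * ∑ j ∈ s, |u j| := by gcongr; exact Nat.le_ceil _

theorem IsModulus.tendsto_card_filter_div_of_tendsto_sum_div {f : ℝ → ℝ} (hf : IsModulus f)
    {α ι : Type*} {l : Filter α} {I : α → Finset ι} {d : α → ℝ} (hd : ∀ a, 0 ≤ d a)
    {u : ι → ℝ} (h : Tendsto (fun a => f (∑ j ∈ I a, |u j|) / f (d a)) l (nhds 0))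
    {ε : ℝ} (hε : 0 < ε) :
    Tendsto (fun a => f #{j ∈ I a | ε < |u j|} / f (d a)) l (nhds 0) := by
  refine squeeze_zero (fun a => div_nonneg (hf.nonneg (by positivity)) (hf.nonneg (hd a)))
    (fun a => ?_) (by simpa using h.const_mul (⌈ε⁻¹⌉₊ : ℝ))
  rw [← mul_div_assoc]
  gcongr
  · exact hf.nonneg (hd a)
  · exact hf.le_nat_mul_of_le_nat_mul (by positivity) (sum_nonneg fun j _ => abs_nonneg _)
      ((I a).card_filter_lt_abs_le_ceil_inv_mul_sum u hε)

theorem wijsman_lac_fcesaro_imp_lac_fstat_general {X : Type*} [MetricSpace X]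
    (k : ℕ → ℕ) (f : ℝ → ℝ) (hf : IsModulus f)
    (A : ℕ → Set X) (B : Set X)
    (h : WijsmanLacFStrongCesaro f k A B) : WijsmanLacFStatConv f k A B :=
  fun x _ε hε => hf.tendsto_card_filter_div_of_tendsto_sum_div (fun _ => Nat.cast_nonneg _)
    (h x) hε

theorem wijsman_lac_fcesaro_imp_lac_fstat {X : Type*} [MetricSpace X]
    (k : ℕ → ℕ) (hk : IsLacunary k) (f : ℝ → ℝ) (hf : IsModulus f)
    (A : ℕ → Set X) (B : Set X)
    (hA : ∀ n, (A n).Nonempty ∧ IsClosed (A n)) (hB : B.Nonempty ∧ IsClosed B)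
    (h : WijsmanLacFStrongCesaro f k A B) : WijsmanLacFStatConv f k A B :=
  wijsman_lac_fcesaro_imp_lac_fstat_general k f hf A B h
end

section
/- Let θ=(k_r) be a lacunary sequence and f an unbounded modulus function that is not θ-compatible. Then there exists a sequence (B_k) of nonempty closed subsets of ℝ (with the usual metric) and B = {0} such that (B_k) is Wijsman θ-lacunary f-statistically convergent to B and Wijsman θ-lacunary uniformly integrable, but (B_k) is not Wijsman θ-lacunary f-strong Cesàro convergent to B. Consequently, if every Wijsman θ-lacunary f-statistically convergent and Wijsman θ-lacunary uniformly integrable sequence of closed subsets of ℝ is Wijsman θ-lacunary f-strong Cesàro convergent to the same limit, then f is θ-compatible. -/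
open Filter Metric Set

section AuxLemmas

variable {f : ℝ → ℝ} {k : ℕ → ℕ}

lemma aux_f_nonneg (hf : IsModulus f) {x : ℝ} (hx : 0 ≤ x) : 0 ≤ f x :=
  hf.1 x (Set.mem_Ici.mpr hx)

lemma aux_f_zero (hf : IsModulus f) : f 0 = 0 :=
  (hf.2.1 0 (Set.mem_Ici.mpr le_rfl)).mpr rfl

lemma aux_f_mono (hf : IsModulus f) {a b : ℝ} (ha : 0 ≤ a) (hab : a ≤ b) : f a ≤ f b :=
  hf.2.2.2.1 (Set.mem_Ici.mpr ha) (Set.mem_Ici.mpr (ha.trans hab)) hab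

lemma aux_f_one_pos (hf : IsModulus f) : 0 < f 1 := by
  rcases lt_or_eq_of_le (aux_f_nonneg hf zero_le_one) with h | h
  · exact h
  · exact absurd ((hf.2.1 1 (Set.mem_Ici.mpr zero_le_one)).mp h.symm) one_ne_zero

/-- the basic ratio is nonnegative -/
lemma aux_g_nonneg (hf : IsModulus f) (t : ℕ) {ε : ℝ} (hε : 0 ≤ ε) :
    0 ≤ f ((lacH k t : ℝ) * ε) / f ((lacH k t : ℝ)) :=
  div_nonneg (aux_f_nonneg hf (mul_nonneg (Nat.cast_nonneg _) hε))
    (aux_f_nonneg hf (Nat.cast_nonneg _))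

lemma aux_g_le_one (hf : IsModulus f) (t : ℕ) {ε : ℝ} (hε : 0 ≤ ε) (hε1 : ε ≤ 1) :
    f ((lacH k t : ℝ) * ε) / f ((lacH k t : ℝ)) ≤ 1 := by
  rcases Nat.eq_zero_or_pos (lacH k t) with h0 | hpos
  · simp [h0, aux_f_zero hf]
  · have hc : (0:ℝ) < (lacH k t : ℝ) := by exact_mod_cast hpos
    have hnum : f ((lacH k t : ℝ) * ε) ≤ f ((lacH k t : ℝ)) := by
      apply aux_f_mono hf (mul_nonneg hc.le hε)
      nlinarith
    have hden : 0 < f ((lacH k t : ℝ)) := by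
      have h1 : f 1 ≤ f ((lacH k t : ℝ)) := by
        apply aux_f_mono hf zero_le_one
        exact_mod_cast hpos
      linarith [aux_f_one_pos hf]
    exact (div_le_one hden).mpr hnum

lemma aux_phi_mono (hf : IsModulus f) {ε₁ ε₂ : ℝ} (h1 : 0 < ε₁) (h12 : ε₁ ≤ ε₂) (h2 : ε₂ ≤ 1) :
    modPhiTheta f k ε₁ ≤ modPhiTheta f k ε₂ := by
  apply Filter.limsup_le_limsup
  · apply Filter.Eventually.of_forall
    intro t
    show f ((lacH k t : ℝ) * ε₁) / f ((lacH k t : ℝ))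
        ≤ f ((lacH k t : ℝ) * ε₂) / f ((lacH k t : ℝ))
    have hden : 0 ≤ f ((lacH k t : ℝ)) := aux_f_nonneg hf (Nat.cast_nonneg _)
    have hnum : f ((lacH k t : ℝ) * ε₁) ≤ f ((lacH k t : ℝ) * ε₂) :=
      aux_f_mono hf (mul_nonneg (Nat.cast_nonneg _) h1.le)
        (mul_le_mul_of_nonneg_left h12 (Nat.cast_nonneg _))
    rcases hden.eq_or_lt with h0 | hpos
    · rw [← h0, div_zero, div_zero]
    · gcongr
  · exact Filter.isCoboundedUnder_le_of_le _ fun t => aux_g_nonneg hf t h1.le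
  · exact Filter.isBoundedUnder_of ⟨1, fun t : ℕ =>
      aux_g_le_one (k := k) hf t (h1.le.trans h12) h2⟩

/-- From non-θ-compatibility: a uniform positive lower bound on `φ_θ` on `(0,1]`,
yielding frequent large ratios. -/
lemma aux_delta (hf : IsModulus f) (hnc : ¬ ThetaCompatible f k) :
    ∃ δ > 0, ∀ m : ℕ, ∃ᶠ t in Filter.atTop,
      δ < f ((lacH k t : ℝ) * (1 / (m + 1))) / f ((lacH k t : ℝ)) := by
  rw [ThetaCompatible, Metric.tendsto_nhds] at hnc
  push_neg at hnc
  obtain ⟨δ, hδ, hfreq⟩ := hnc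
  have key : ∀ ε : ℝ, 0 < ε → ε ≤ 1 → δ ≤ modPhiTheta f k ε := by
    intro ε hε hε1
    have hmem : Set.Ioo (0:ℝ) ε ∈ nhdsWithin 0 (Set.Ioi 0) :=
      Ioo_mem_nhdsGT_of_mem ⟨le_rfl, hε⟩
    obtain ⟨ε', hd, hε'⟩ :=
      (hfreq.and_eventually (Filter.eventually_of_mem hmem fun x hx => hx)).exists
    have hφnn : 0 ≤ modPhiTheta f k ε' := by
      apply Filter.le_limsup_of_frequently_le
      · exact Filter.Frequently.of_forall fun t => aux_g_nonneg hf t hε'.1.le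
      · exact Filter.isBoundedUnder_of ⟨1, fun t : ℕ =>
          aux_g_le_one (k := k) hf t hε'.1.le (hε'.2.le.trans hε1)⟩
    have hd' : δ ≤ modPhiTheta f k ε' := by
      rw [Real.dist_eq, sub_zero, abs_of_nonneg hφnn] at hd
      linarith
    exact hd'.trans (aux_phi_mono hf hε'.1 hε'.2.le hε1)
  refine ⟨δ / 2, half_pos hδ, fun m => ?_⟩
  apply Filter.frequently_lt_of_lt_limsup
  · exact Filter.isCoboundedUnder_le_of_le _ fun t => aux_g_nonneg hf t (by positivity)
  · refine lt_of_lt_of_le (half_lt_self hδ) (key _ (by positivity) ?_)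
    rw [div_le_one (by positivity)]
    linarith [Nat.cast_nonneg (α := ℝ) m]

/-- disjointness of the lacunary blocks -/
lemma aux_block_disj (hk : IsLacunary k) {r r' j : ℕ} (hrr : r < r')
    (h1 : j ∈ lacI k r) (h2 : j ∈ lacI k r') : False := by
  simp only [lacI, Finset.mem_Ioc] at h1 h2
  have : k (r + 1) ≤ k r' := hk.2.1.monotone (Nat.succ_le_of_lt hrr)
  omega

lemma aux_block_uniq (hk : IsLacunary k) {r r' j : ℕ}
    (h1 : j ∈ lacI k r) (h2 : j ∈ lacI k r') : r = r' := by
  rcases lt_trichotomy r r' with h | h | h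
  · exact absurd (aux_block_disj hk h h1 h2) not_false
  · exact h
  · exact absurd (aux_block_disj hk h h2 h1) not_false

end AuxLemmas

-- The counterexample sequence: value `1/(m+1)` on the block `I_{T m}`, zero elsewhere.
open scoped Classical in
noncomputable def auxSeq (k : ℕ → ℕ) (T : ℕ → ℕ) : ℕ → ℝ :=
  fun j => if hj : ∃ m, j ∈ lacI k (T m) then (1 : ℝ) / (hj.choose + 1) else 0

section AuxSeq

variable {k : ℕ → ℕ} {T : ℕ → ℕ}

lemma auxSeq_mem (hk : IsLacunary k) (hT : StrictMono T) {m j : ℕ}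
    (hj : j ∈ lacI k (T m)) : auxSeq k T j = 1 / (m + 1) := by
  have hex : ∃ m', j ∈ lacI k (T m') := ⟨m, hj⟩
  have hm' : T hex.choose = T m := aux_block_uniq hk hex.choose_spec hj
  have : hex.choose = m := hT.injective hm'
  classical
  rw [auxSeq]
  rw [dif_pos hex, this]

lemma auxSeq_nonneg (j : ℕ) : 0 ≤ auxSeq k T j := by
  rw [auxSeq]
  split
  · positivity
  · exact le_refl 0

lemma auxSeq_le_one (j : ℕ) : auxSeq k T j ≤ 1 := by
  rw [auxSeq]
  split
  · rw [div_le_one (by positivity)]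
    linarith [Nat.cast_nonneg (α := ℝ) (Exists.choose ‹_›)]
  · exact zero_le_one

lemma auxSeq_small (hk : IsLacunary k) (hT : StrictMono T) {m₀ r j : ℕ}
    (hr : T m₀ < r) (hj : j ∈ lacI k r) : auxSeq k T j ≤ 1 / (m₀ + 1) := by
  by_cases hex : ∃ m, j ∈ lacI k (T m)
  · obtain ⟨m, hm⟩ := hex
    have hrm : r = T m := aux_block_uniq hk hj hm
    have hmm : m₀ < m := hT.lt_iff_lt.mp (hrm ▸ hr)
    rw [auxSeq_mem hk hT hm]
    apply div_le_div_of_nonneg_left zero_le_one (by positivity)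
    have : (m₀ : ℝ) ≤ m := by exact_mod_cast hmm.le
    linarith
  · rw [auxSeq]
    rw [dif_neg hex]
    positivity

end AuxSeq
theorem exists_lac_fstat_lacUnifInt_not_lac_fcesaro_of_not_thetaCompatible
    (k : ℕ → ℕ) (hk : IsLacunary k)
    (f : ℝ → ℝ) (hf : IsModulus f) (hnc : ¬ ThetaCompatible f k) :
    (∃ B : ℕ → Set ℝ, (∀ n, (B n).Nonempty ∧ IsClosed (B n)) ∧
      WijsmanLacFStatConv f k B ({0} : Set ℝ) ∧ WijsmanLacUnifIntegrable k B ∧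
      ¬ WijsmanLacFStrongCesaro f k B ({0} : Set ℝ)) ∧
    ((∀ (C : ℕ → Set ℝ) (D : Set ℝ), (∀ n, (C n).Nonempty ∧ IsClosed (C n)) →
        D.Nonempty → IsClosed D → WijsmanLacFStatConv f k C D →
        WijsmanLacUnifIntegrable k C → WijsmanLacFStrongCesaro f k C D) →
      ThetaCompatible f k) := by
  obtain ⟨δ, hδ, hfreqm⟩ := aux_delta hf hnc
  have hsel : ∀ m N : ℕ, ∃ t, N ≤ t ∧
      δ < f ((lacH k t : ℝ) * (1 / (m + 1))) / f ((lacH k t : ℝ)) := by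
    intro m N
    obtain ⟨t, h1, h2⟩ := ((hfreqm m).and_eventually (Filter.eventually_ge_atTop N)).exists
    exact ⟨t, h2, h1⟩
  let T : ℕ → ℕ := fun m =>
    Nat.rec (hsel 0 0).choose (fun m ih => (hsel (m + 1) (ih + 1)).choose) m
  have hTS : ∀ m, T (m + 1) = (hsel (m + 1) (T m + 1)).choose := fun m => rfl
  have hTlt : ∀ m, T m < T (m + 1) := by
    intro m
    rw [hTS m]
    have := (hsel (m + 1) (T m + 1)).choose_spec.1
    omega
  have hTmono : StrictMono T := strictMono_nat_of_lt_succ hTlt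
  have hTg : ∀ m : ℕ, δ < f ((lacH k (T m) : ℝ) * (1 / ((m : ℝ) + 1)))
      / f ((lacH k (T m) : ℝ)) := by
    intro m
    cases m with
    | zero =>
      have h0 : T 0 = (hsel 0 0).choose := rfl
      rw [h0]
      exact (hsel 0 0).choose_spec.2
    | succ n =>
      rw [hTS n]
      exact (hsel (n + 1) (T n + 1)).choose_spec.2
  have hd : ∀ (y c : ℝ), infDist y ({c} : Set ℝ) = |y - c| := fun y c => by
    rw [Metric.infDist_singleton, Real.dist_eq]
  -- Property 1: Wijsman lacunary f-statistical convergence to {0}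
  have hP1 : WijsmanLacFStatConv f k (fun n => ({auxSeq k T n} : Set ℝ)) ({0} : Set ℝ) := by
    intro y ε hε
    obtain ⟨m₀, hm₀⟩ := exists_nat_one_div_lt hε
    apply Filter.Tendsto.congr' _ tendsto_const_nhds
    filter_upwards [Filter.eventually_gt_atTop (T m₀)] with r hr
    have hnm : ∀ j ∈ lacI k r,
        ¬ (ε < |infDist y ({auxSeq k T j} : Set ℝ) - infDist y ({0} : Set ℝ)|) := by
      intro j hj
      rw [not_lt, hd, hd]
      have h1 : abs (|y - auxSeq k T j| - |y - 0|) ≤ |auxSeq k T j| := by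
        have e : (y - auxSeq k T j) - (y - 0) = -(auxSeq k T j) := by ring
        calc abs (|y - auxSeq k T j| - |y - 0|) ≤ |(y - auxSeq k T j) - (y - 0)| :=
              abs_abs_sub_abs_le_abs_sub _ _
        _ = |auxSeq k T j| := by rw [e, abs_neg]
      have h2 : auxSeq k T j ≤ 1 / ((m₀ : ℝ) + 1) := auxSeq_small hk hTmono hr hj
      have h3 : |auxSeq k T j| = auxSeq k T j := abs_of_nonneg (auxSeq_nonneg j)
      linarith
    rw [Finset.filter_eq_empty_iff.mpr hnm, Finset.card_empty, Nat.cast_zero,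
      aux_f_zero hf, zero_div]
  -- Property 2: Wijsman lacunary uniform integrability
  have hP2 : WijsmanLacUnifIntegrable k (fun n => ({auxSeq k T n} : Set ℝ)) := by
    intro y
    apply Filter.Tendsto.congr' _ tendsto_const_nhds
    filter_upwards [Filter.eventually_ge_atTop (|y| + 2)] with M hM
    have hzero : ∀ t : ℕ,
        (∑ j ∈ lacI k t, if M ≤ |infDist y ({auxSeq k T j} : Set ℝ)|
          then |infDist y ({auxSeq k T j} : Set ℝ)| else 0) / (lacH k t : ℝ) = 0 := by
      intro t
      rw [Finset.sum_eq_zero, zero_div]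
      intro j _
      rw [if_neg]
      rw [hd, not_le]
      have ha : |auxSeq k T j| = auxSeq k T j := abs_of_nonneg (auxSeq_nonneg j)
      calc abs (|y - auxSeq k T j|) = |y - auxSeq k T j| := abs_abs _
      _ ≤ |y| + |auxSeq k T j| := abs_sub _ _
      _ ≤ |y| + 1 := by linarith [auxSeq_le_one (k := k) (T := T) j]
      _ < M := by linarith
    exact ((iSup_congr hzero).trans ciSup_const).symm
  -- Property 3: not Wijsman lacunary f-strong Cesàro convergent to {0}
  have hP3 : ¬ WijsmanLacFStrongCesaro f k (fun n => ({auxSeq k T n} : Set ℝ))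
      ({0} : Set ℝ) := by
    intro HC
    have H0 := HC 0
    have hval : ∀ m : ℕ, δ <
        f (∑ j ∈ lacI k (T m),
          |infDist (0:ℝ) ({auxSeq k T j} : Set ℝ) - infDist (0:ℝ) ({0} : Set ℝ)|)
        / f ((lacH k (T m) : ℝ)) := by
      intro m
      have hterm : ∀ j ∈ lacI k (T m),
          |infDist (0:ℝ) ({auxSeq k T j} : Set ℝ) - infDist (0:ℝ) ({0} : Set ℝ)|
            = 1 / ((m : ℝ) + 1) := by
        intro j hj
        have e1 : |(0:ℝ) - 0| = 0 := by simp
        rw [hd, hd, e1, sub_zero, abs_abs, zero_sub, abs_neg,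
          abs_of_nonneg (auxSeq_nonneg j), auxSeq_mem hk hTmono hj]
      have hsum : ∑ j ∈ lacI k (T m),
          |infDist (0:ℝ) ({auxSeq k T j} : Set ℝ) - infDist (0:ℝ) ({0} : Set ℝ)|
            = (lacH k (T m) : ℝ) * (1 / ((m : ℝ) + 1)) := by
        rw [Finset.sum_congr rfl hterm, Finset.sum_const, nsmul_eq_mul]
        congr 1
        rw [lacI, Nat.card_Ioc]
        rfl
      rw [hsum]
      exact hTg m
    have hcomp := H0.comp (hTmono.tendsto_atTop)
    obtain ⟨m, hm⟩ := (hcomp.eventually_lt_const hδ).exists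
    simp only [Function.comp_apply] at hm
    exact absurd hm (not_lt.mpr (hval m).le)
  refine ⟨⟨fun n => ({auxSeq k T n} : Set ℝ),
      fun n => ⟨Set.singleton_nonempty _, isClosed_singleton⟩, hP1, hP2, hP3⟩, fun H => ?_⟩
  exact absurd (H (fun n => ({auxSeq k T n} : Set ℝ)) ({0} : Set ℝ)
    (fun n => ⟨Set.singleton_nonempty _, isClosed_singleton⟩)
    (Set.singleton_nonempty 0) isClosed_singleton hP1 hP2) hP3
end

section
/- If an unbounded modulus function f is compatible, then f is θ-compatible for every lacunary sequence θ. -/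
open Filter Metric Set

/-!
For `0 ≤ ε ≤ 1` monotonicity puts every ratio `f (n ε) / f n` in `[0, 1]`, so `φ_θ(ε)` is the
limsup of a bounded sequence along the indices `h_t → ∞`, which is at most its limsup `φ(ε)`
over all `n`. Hence `0 ≤ φ_θ ≤ φ` near `0⁺`, and `φ_θ → 0` by squeezing.
-/

namespace IsModulus

variable {f : ℝ → ℝ}

lemma div_mem_Icc (hf : IsModulus f) {x y : ℝ} (hx : 0 ≤ x) (hxy : x ≤ y) :
    f x / f y ∈ Icc (0 : ℝ) 1 :=
  have hfy : 0 ≤ f y := hf.1 y (hx.trans hxy)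
  ⟨div_nonneg (hf.1 x hx) hfy, div_le_one_of_le₀ (hf.2.2.2.1 hx (hx.trans hxy) hxy) hfy⟩

lemma mul_div_mem_Icc (hf : IsModulus f) {ε : ℝ} (hε : ε ∈ Icc (0 : ℝ) 1) (n : ℕ) :
    f (n * ε) / f n ∈ Icc (0 : ℝ) 1 :=
  hf.div_mem_Icc (mul_nonneg n.cast_nonneg hε.1) (mul_le_of_le_one_right n.cast_nonneg hε.2)

lemma modPhiTheta_nonneg (hf : IsModulus f) (k : ℕ → ℕ) {ε : ℝ} (hε : ε ∈ Icc (0 : ℝ) 1) :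
    0 ≤ modPhiTheta f k ε :=
  le_limsup_of_frequently_le (Frequently.of_forall fun _ => (hf.mul_div_mem_Icc hε _).1)
    (isBoundedUnder_of ⟨1, fun _ => (hf.mul_div_mem_Icc hε _).2⟩)

lemma modPhiTheta_le_modPhi (hf : IsModulus f) {k : ℕ → ℕ} (hk : Tendsto (lacH k) atTop atTop)
    {ε : ℝ} (hε : ε ∈ Icc (0 : ℝ) 1) : modPhiTheta f k ε ≤ modPhi f ε :=
  hk.limsup_comp_le_limsup (isCoboundedUnder_le_of_le _ fun n => (hf.mul_div_mem_Icc hε n).1)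
    (isBoundedUnder_of ⟨1, fun n => (hf.mul_div_mem_Icc hε n).2⟩)

end IsModulus

theorem thetaCompatible_of_compatible
    (f : ℝ → ℝ) (hf : IsModulus f) (hfc : Compatible f)
    (k : ℕ → ℕ) (hk : IsLacunary k) : ThetaCompatible f k := by
  have hsmall : ∀ᶠ ε in nhdsWithin (0 : ℝ) (Ioi 0), ε ∈ Icc (0 : ℝ) 1 := Icc_mem_nhdsGT one_pos
  refine tendsto_of_tendsto_of_tendsto_of_le_of_le' tendsto_const_nhds hfc ?_ ?_
  · filter_upwards [hsmall] with ε hε using hf.modPhiTheta_nonneg k hε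
  · filter_upwards [hsmall] with ε hε using hf.modPhiTheta_le_modPhi hk.2.2 hε
end
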